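/- The minimum over ρ ∈ [0, 1) of max(ρ, (2 - 2ρ - ρ²)/(6(1 - ρ))) equals (4 - √6)/5. -/
import Mathlib


/-- The minimum over ρ ∈ [0, 1) of max(ρ, (2 - 2ρ - ρ²)/(6(1 - ρ))) equals (4 - √6)/5. -/
theorem stmt0 :
    IsLeast {x : ℝ | ∃ ρ : ℝ, 0 ≤ ρ ∧ ρ < 1 ∧
      x = max ρ ((2 - 2 * ρ - ρ ^ 2) / (6 * (1 - ρ)))} ((4 - Real.sqrt 6) / 5) := by
  have hs : Real.sqrt 6 ^ 2 = 6 := Real.sq_sqrt (by norm_num)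
  have hs1 : (2:ℝ) < Real.sqrt 6 := by
    nlinarith [Real.sqrt_nonneg 6, hs]
  have hs2 : Real.sqrt 6 < 3 := by
    nlinarith [Real.sqrt_nonneg 6, hs]
  set r : ℝ := (4 - Real.sqrt 6) / 5 with hr
  have h0 : 0 ≤ r := by rw [hr]; nlinarith
  have h1 : r < 1 := by rw [hr]; nlinarith
  have hden : (0:ℝ) < 6 * (1 - r) := by nlinarith
  have hkey : 5 * r ^ 2 - 8 * r + 2 = 0 := by
    rw [hr]; field_simp; nlinarith
  constructor
  · refine ⟨r, h0, h1, ?_⟩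
    have : (2 - 2 * r - r ^ 2) / (6 * (1 - r)) = r := by
      rw [div_eq_iff (ne_of_gt hden)]; nlinarith
    rw [this, max_self]
  · rintro x ⟨ρ, hρ0, hρ1, rfl⟩
    rcases le_or_gt r ρ with h | h
    · exact le_max_of_le_left h
    · refine le_max_of_le_right ?_
      rw [le_div_iff₀ (by nlinarith)]
      nlinarith [mul_pos (sub_pos.2 h) (show (0:ℝ) < 2 + ρ - 5 * r by rw [hr]; nlinarith)]
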